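/- Norm correspondence in the stable sector (Lemma C.1). Let λ and μ be partitions and let m be an integer with m ≥ |λ| + |μ|. With Λ* = (λ + δ^m) ∪ μ, Λ⊛ = (λ + δ^{m+1}) ∪ μ, h↓_Λ(q,t) = ∏_{s ∈ BΛ} (1 − q^{a_{Λ⊛}(s)} t^{l_{Λ*}(s)+1}), and h↑_Λ(q,t) = h↓_{Λ'}(t,q), where Λ' is the conjugate superpartition given by (Λ')* = (μ' + δ^m) ∪ λ' and (Λ')⊛ = (μ' + δ^{m+1}) ∪ λ', the following identity holds in the field ℚ(q,t): q^{|λ|} · h↑_Λ(q,t)/h↓_Λ(q,t) = q^{|λ|} · b_λ(q,qt)^{−1} · b_μ(qt,t)^{−1}, where b_ν(q,t) = ∏_{s ∈ ν} (1 − q^{a_ν(s)} t^{l_ν(s)+1})/(1 − q^{a_ν(s)+1} t^{l_ν(s)}). -/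

import Mathlib

noncomputable section

namespace DoubleMacdonald

/-- A partition, encoded as a weakly decreasing function `ℕ → ℕ` (0-indexed: `f 0 = λ₁`)
with finitely many nonzero values. -/
def IsPartition (f : ℕ → ℕ) : Prop :=
  (∀ ⦃i j : ℕ⦄, i ≤ j → f j ≤ f i) ∧ ∃ N, ∀ i, N ≤ i → f i = 0

/-- The size `|λ| = Σᵢ λᵢ` of a partition. -/
def psize (f : ℕ → ℕ) : ℕ := ∑ᶠ i, f i

/-- The number `ℓ(λ)` of nonzero parts of a partition. -/
def plen (f : ℕ → ℕ) : ℕ := Nat.card {i : ℕ | 1 ≤ f i}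

/-- The conjugate partition: `λ'ⱼ = #{i : λᵢ ≥ j}` (0-indexed: `conj f j = λ'_{j+1}`). -/
def conj (f : ℕ → ℕ) : ℕ → ℕ := fun j => Nat.card {i : ℕ | j + 1 ≤ f i}

/-- The staircase partition `δ^m = (m-1, m-2, …, 1, 0)`. -/
def delta (m : ℕ) : ℕ → ℕ := fun i => m - 1 - i

/-- Componentwise sum of partitions. -/
def addF (f g : ℕ → ℕ) : ℕ → ℕ := fun i => f i + g i

/-- Union `λ ∪ μ` of partitions: the weakly decreasing rearrangement of the combined
multiset of parts, defined via `(λ ∪ μ)' = λ' + μ'`. -/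
def unionF (f g : ℕ → ℕ) : ℕ → ℕ := conj (addF (conj f) (conj g))

/-- Partial sum `λ₁ + ⋯ + λ_k`. -/
def psum (f : ℕ → ℕ) (k : ℕ) : ℕ := ∑ i ∈ Finset.range k, f i

/-- The statistic `n(λ) = Σᵢ (i-1) λᵢ`. -/
def nstat (f : ℕ → ℕ) : ℕ := ∑ᶠ i, i * f i

/-- The (extended) dominance order: `f ⪰ g` iff all partial sums of `f` dominate those of `g`. -/
def Dominates (f g : ℕ → ℕ) : Prop := ∀ k, psum g k ≤ psum f k

/-- The field `ℚ(q,t)` of rational functions in two indeterminates over `ℚ`. -/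
abbrev K : Type := FractionRing (MvPolynomial (Fin 2) ℚ)

/-- The indeterminate `q` of `ℚ(q,t)`. -/
def q : K := algebraMap (MvPolynomial (Fin 2) ℚ) K (MvPolynomial.X 0)

/-- The indeterminate `t` of `ℚ(q,t)`. -/
def t : K := algebraMap (MvPolynomial (Fin 2) ℚ) K (MvPolynomial.X 1)

/-- A cell `(i,j)` (0-indexed) of `Λ*` is bosonic for the pair `(Λ*, Λ⊛)` if it is NOT
the case that both `Λ⊛ᵢ = Λ*ᵢ + 1` and `(Λ⊛)'ⱼ = (Λ*)'ⱼ + 1`. -/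
def Bosonic (L Ls : ℕ → ℕ) (i j : ℕ) : Prop :=
  ¬(Ls i = L i + 1 ∧ conj Ls j = conj L j + 1)

instance (L Ls : ℕ → ℕ) (i j : ℕ) : Decidable (Bosonic L Ls i j) := by
  unfold Bosonic; infer_instance

/-- The hook product `∏_{s ∈ BΛ} (1 − a^{a_{Λ⊛}(s)} b^{l_{Λ*}(s)+1})` over the bosonic
cells of `Λ*`, as an element of `ℚ(q,t)`.  `h↓_Λ(q,t)` is obtained with `(a,b) = (q,t)`,
and `h↑_Λ(q,t) = h↓_{Λ'}(t,q)` with `(a,b) = (t,q)` and the pair `(Λ*, Λ⊛)` conjugated. -/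
def hdownGen (a b : K) (L Ls : ℕ → ℕ) : K :=
  ∏ i ∈ Finset.range (plen L), ∏ j ∈ Finset.range (L i),
    if Bosonic L Ls i j then (1 - a ^ (Ls i - (j + 1)) * b ^ (conj L j - i)) else 1

/-- `b_ν(a,b) = ∏_{s ∈ ν} (1 − a^{arm(s)} b^{leg(s)+1}) / (1 − a^{arm(s)+1} b^{leg(s)})`. -/
def bProd (a b : K) (f : ℕ → ℕ) : K :=
  ∏ i ∈ Finset.range (plen f), ∏ j ∈ Finset.range (f i),
    (1 - a ^ (f i - (j + 1)) * b ^ (conj f j - i)) /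
      (1 - a ^ (f i - j) * b ^ (conj f j - (i + 1)))

/-!
Rows and columns are counted from `0`, as in the definitions. Since `m ≥ ℓ(λ) + μ₁`, the first
`ℓ(λ)` rows of `Λ* = (λ + δ^m) ∪ μ` are those of `λ + δ^m`, all fermionic; the other rows are the
staircase rows, fermionic and lying in fermionic columns, interleaved with the rows of `μ`, which
are bosonic. Column `j` of `λ + δ^m` is fermionic exactly when `j = λᵢ + m - 1 - i` for some
`i < m`; by Macdonald's complementation the remaining columns are the `m + j' - λ'ⱼ'` (with `λ'ⱼ'`
the number of rows longer than `j'`), of length `λ'ⱼ'`. So the bosonic cells in row `i` of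
`λ + δ^m` match the cells `(i, j')` of `λ`, and
`h↓_Λ(q,t) = ∏_{s ∈ λ} (1 - q^{a+l+1} t^{l+1}) ∏_{s ∈ μ} (1 - q^a t^{a+l+1})`.
Applied to the conjugate superpartition and transposed, this gives
`h↑_Λ(q,t) = ∏_{s ∈ λ} (1 - q^{a+l+1} t^l) ∏_{s ∈ μ} (1 - q^{a+1} t^{a+l+1})`, and the quotient
is `b_λ(q,qt)⁻¹ b_μ(qt,t)⁻¹` factor by factor.
-/

open Finset

section Partitions

variable {f a b : ℕ → ℕ}

theorem IsPartition.lt_conj_iff (hf : IsPartition f) {i j : ℕ} : i < conj f j ↔ j < f i := by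
  obtain ⟨hanti, N, hN⟩ := hf
  have hcard : conj f j = {i | j < f i}.ncard := Nat.card_coe_set_eq _
  rw [hcard]
  constructor
  · intro h
    by_contra hij
    have hsub : {i | j < f i} ⊆ Set.Iio i := fun x hx => by
      by_contra hx'
      exact hij (lt_of_lt_of_le hx (hanti (not_lt.mp hx')))
    have := Set.ncard_le_ncard hsub (Set.finite_Iio i)
    rw [Set.ncard_Iio_nat] at this
    omega
  · intro h
    have hfin : {i | j < f i}.Finite := (Set.finite_Iio N).subset fun x (hx : j < f x) => by
      by_contra hx'
      have := hN x (not_lt.mp hx')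
      omega
    have := Set.ncard_le_ncard (s := Set.Iic i) (t := {i | j < f i})
      (fun x hx => lt_of_lt_of_le h (hanti hx)) hfin
    rw [Set.ncard_Iic_nat] at this
    omega

theorem IsPartition.conj_eq (hf : IsPartition f) {j c : ℕ} (hlt : 0 < c → j < f (c - 1))
    (hle : f c ≤ j) : conj f j = c :=
  eq_of_forall_lt_iff fun i => by
    rw [hf.lt_conj_iff]
    constructor
    · intro hi
      by_contra! hci
      exact absurd (hf.1 hci) (by omega)
    · intro hi
      exact lt_of_lt_of_le (hlt (by omega)) (hf.1 (by omega))

theorem IsPartition.eq_zero_of_conj_zero_le (hf : IsPartition f) {i : ℕ} (hi : conj f 0 ≤ i) :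
    f i = 0 := by
  by_contra h
  exact absurd (hf.lt_conj_iff.mpr (Nat.pos_of_ne_zero h)) (not_lt.mpr hi)

theorem IsPartition.conj_eq_zero (hf : IsPartition f) {j : ℕ} (hj : f 0 ≤ j) : conj f j = 0 :=
  Nat.eq_zero_of_not_pos fun h => absurd (hf.lt_conj_iff.mp h) (not_lt.mpr hj)

theorem isPartition_conj (hf : IsPartition f) : IsPartition (conj f) := by
  refine ⟨fun j j' hjj' => le_of_forall_lt fun i hi => ?_, f 0, fun j hj => ?_⟩
  · exact hf.lt_conj_iff.mpr (lt_of_le_of_lt hjj' (hf.lt_conj_iff.mp hi))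
  · by_contra h
    have := hf.lt_conj_iff.mp (Nat.pos_of_ne_zero h)
    have := hf.1 (Nat.zero_le 0)
    omega

theorem IsPartition.conj_conj (hf : IsPartition f) : conj (conj f) = f :=
  funext fun i => eq_of_forall_lt_iff fun j => by
    rw [(isPartition_conj hf).lt_conj_iff, hf.lt_conj_iff]

theorem IsPartition.psize_eq_sum (hf : IsPartition f) {N : ℕ} (hN : conj f 0 ≤ N) :
    psize f = ∑ i ∈ range N, f i :=
  finsum_eq_sum_of_support_subset f fun i hi => by
    by_contra h
    simp only [coe_range, Set.mem_Iio, not_lt] at h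
    exact hi (hf.eq_zero_of_conj_zero_le (hN.trans h))

theorem IsPartition.conj_zero_le_psize (hf : IsPartition f) : conj f 0 ≤ psize f := by
  rw [hf.psize_eq_sum le_rfl]
  have := card_nsmul_le_sum _ f 1 fun i hi => hf.lt_conj_iff.mp (mem_range.mp hi)
  rwa [card_range, smul_eq_mul, mul_one] at this

theorem IsPartition.apply_zero_le_psize (hf : IsPartition f) : f 0 ≤ psize f := by
  rw [hf.psize_eq_sum (Nat.le_succ _)]
  exact single_le_sum (fun _ _ => Nat.zero_le _) (mem_range.mpr (Nat.succ_pos _))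

theorem isPartition_addF (ha : IsPartition a) (hb : IsPartition b) : IsPartition (addF a b) := by
  obtain ⟨ha, N, hN⟩ := ha
  obtain ⟨hb, N', hN'⟩ := hb
  refine ⟨fun i j hij => Nat.add_le_add (ha hij) (hb hij), N + N', fun i hi => ?_⟩
  simp only [addF, hN i (by omega), hN' i (by omega)]

theorem isPartition_unionF (ha : IsPartition a) (hb : IsPartition b) :
    IsPartition (unionF a b) :=
  isPartition_conj (isPartition_addF (isPartition_conj ha) (isPartition_conj hb))

theorem conj_unionF (ha : IsPartition a) (hb : IsPartition b) (j : ℕ) :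
    conj (unionF a b) j = conj a j + conj b j :=
  congr_fun (isPartition_addF (isPartition_conj ha) (isPartition_conj hb)).conj_conj j

theorem lt_unionF_iff (ha : IsPartition a) (hb : IsPartition b) {i j : ℕ} :
    j < unionF a b i ↔ i < conj a j + conj b j := by
  rw [← (isPartition_unionF ha hb).lt_conj_iff, conj_unionF ha hb]

theorem unionF_apply_of_le (ha : IsPartition a) (hb : IsPartition b) {i : ℕ} (h : b 0 ≤ a i) :
    unionF a b i = a i :=
  eq_of_forall_lt_iff fun j => by
    rw [lt_unionF_iff ha hb, ha.lt_conj_iff.symm]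
    constructor
    · intro hij
      by_contra hj
      rw [hb.conj_eq_zero (h.trans (not_lt.mp (mt ha.lt_conj_iff.mpr hj)))] at hij
      exact hj hij
    · exact fun hij => Nat.lt_add_right _ hij

theorem unionF_apply_eq_of_le_of_le (ha : IsPartition a) (hb : IsPartition b) {k r : ℕ}
    (h₁ : k + conj a (b k) ≤ r) (h₂ : r ≤ k + conj a (b k - 1)) :
    unionF a b r = b k :=
  eq_of_forall_lt_iff fun j => by
    rw [lt_unionF_iff ha hb]
    constructor
    · intro hr
      by_contra! hj
      have := (isPartition_conj ha).1 hj
      have : conj b j ≤ k := not_lt.mp fun h => absurd (hb.lt_conj_iff.mp h) (not_lt.mpr hj)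
      omega
    · intro hj
      have := (isPartition_conj ha).1 (Nat.le_sub_one_of_lt hj)
      have := hb.lt_conj_iff.mpr hj
      omega

end Partitions

section HookProducts

variable {M : Type*} {f : ℕ → ℕ}

/-- `∏_{s ∈ f} φ (a_f(s)) (l_f(s))`. -/
def hookProd [CommMonoid M] (f : ℕ → ℕ) (φ : ℕ → ℕ → M) : M :=
  ∏ i ∈ range (conj f 0), ∏ j ∈ range (f i), φ (f i - (j + 1)) (conj f j - (i + 1))

theorem IsPartition.prod_cells_comm [CommMonoid M] (hf : IsPartition f) (T : ℕ → ℕ → M) :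
    ∏ i ∈ range (conj f 0), ∏ j ∈ range (f i), T i j =
      ∏ j ∈ range (f 0), ∏ i ∈ range (conj f j), T i j :=
  prod_comm' fun i j => by
    simp only [mem_range, hf.lt_conj_iff]
    exact ⟨fun h => ⟨h.2, h.2.trans_le (hf.1 (Nat.zero_le i))⟩,
      fun h => ⟨lt_of_le_of_lt (Nat.zero_le j) h.1, h.1⟩⟩

theorem IsPartition.hookProd_conj [CommMonoid M] (hf : IsPartition f) (φ : ℕ → ℕ → M) :
    hookProd (conj f) φ = hookProd f fun a l => φ l a := by
  rw [hookProd, hookProd, hf.prod_cells_comm, hf.conj_conj]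

theorem hookProd_div [DivisionCommMonoid M] (φ ψ : ℕ → ℕ → M) :
    hookProd f (fun a l => φ a l / ψ a l) = hookProd f φ / hookProd f ψ := by
  simp only [hookProd, prod_div_distrib]

theorem IsPartition.bProd_eq_hookProd (hf : IsPartition f) (a b : K) :
    bProd a b f =
      hookProd f fun x l => (1 - a ^ x * b ^ (l + 1)) / (1 - a ^ (x + 1) * b ^ l) := by
  refine prod_congr rfl fun i _ => prod_congr rfl fun j hj => ?_
  have hj := mem_range.mp hj
  have hi : i < conj f j := hf.lt_conj_iff.mpr hj
  rw [show f i - j = f i - (j + 1) + 1 by omega,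
    show conj f j - i = conj f j - (i + 1) + 1 by omega]

end HookProducts

section Staircase

variable {f : ℕ → ℕ} {m : ℕ}

theorem IsPartition.addF_delta (hf : IsPartition f) (m : ℕ) : IsPartition (addF f (delta m)) :=
  isPartition_addF hf ⟨fun i j hij => by simp only [delta]; omega, m, fun i hi => by
    simp only [delta]; omega⟩

theorem IsPartition.conj_addF_delta_of_add_lt (hf : IsPartition f) {j : ℕ}
    (hj : j + conj f 0 < m) : conj (addF f (delta m)) j = m - 1 - j := by
  have hzero := hf.eq_zero_of_conj_zero_le (i := m - 1 - j) (by omega)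
  refine (hf.addF_delta m).conj_eq (fun _ => ?_) ?_ <;> simp only [addF, delta] <;> omega

theorem IsPartition.conj_addF_delta_le_succ (hf : IsPartition f) (j : ℕ) :
    conj (addF f (delta m)) j ≤ conj (addF f (delta (m + 1))) j :=
  le_of_forall_lt fun i hi => (hf.addF_delta _).lt_conj_iff.mpr <|
    lt_of_lt_of_le ((hf.addF_delta m).lt_conj_iff.mp hi) (by simp only [addF, delta]; omega)

variable (hf : IsPartition f) (hpm : conj f 0 ≤ m)
include hf hpm

theorem IsPartition.conj_addF_delta_succ_succ (j : ℕ) :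
    conj (addF f (delta (m + 1))) (j + 1) = conj (addF f (delta m)) j :=
  eq_of_forall_lt_iff fun i => by
    have hzero : m ≤ i → f i = 0 := fun h => hf.eq_zero_of_conj_zero_le (hpm.trans h)
    rw [(hf.addF_delta _).lt_conj_iff, (hf.addF_delta _).lt_conj_iff]
    simp only [addF, delta]
    omega

theorem IsPartition.conj_addF_delta_succ_le (j : ℕ) :
    conj (addF f (delta (m + 1))) j ≤ conj (addF f (delta m)) j + 1 := by
  cases j with
  | zero =>
    rw [hf.conj_addF_delta_of_add_lt (by omega)]
    rcases Nat.lt_or_ge m 2 with hm₂ | hm₂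
    · omega
    · have := ((hf.addF_delta m).lt_conj_iff (i := m - 2) (j := 0)).mpr
        (by simp only [addF, delta]; omega)
      omega
  | succ j =>
    rw [hf.conj_addF_delta_succ_succ hpm]
    set c := conj (addF f (delta m)) (j + 1)
    have hc : addF f (delta m) c ≤ j + 1 :=
      not_lt.mp fun h => lt_irrefl c ((hf.addF_delta m).lt_conj_iff.mpr h)
    have hzero : m ≤ c + 1 → f (c + 1) = 0 := fun h => hf.eq_zero_of_conj_zero_le (hpm.trans h)
    have hanti : f (c + 1) ≤ f c := hf.1 (Nat.le_succ c)
    by_contra! h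
    have := (hf.addF_delta m).lt_conj_iff.mp h
    simp only [addF, delta] at hc this
    omega

theorem IsPartition.conj_addF_delta_le (j : ℕ) : conj (addF f (delta m)) j ≤ m := by
  have := hf.conj_addF_delta_le_succ (m := m) 0
  rw [hf.conj_addF_delta_of_add_lt (m := m + 1) (by omega)] at this
  exact ((isPartition_conj (hf.addF_delta m)).1 (Nat.zero_le j)).trans (by omega)

theorem IsPartition.conj_addF_delta_eq_conj {j j' : ℕ} (h₁ : m + j' - conj f j' ≤ j + 1)
    (h₂ : j ≤ m + j' - conj f j') : conj (addF f (delta m)) j = conj f j' := by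
  set c := conj f j'
  have hcp : c ≤ conj f 0 := (isPartition_conj hf).1 (Nat.zero_le j')
  have hfc : f c ≤ j' := not_lt.mp fun h => lt_irrefl c (hf.lt_conj_iff.mpr h)
  have hzero : m ≤ c → f c = 0 := fun h => hf.eq_zero_of_conj_zero_le (hpm.trans h)
  refine (hf.addF_delta m).conj_eq (fun hc => ?_) ?_
  · have := hf.lt_conj_iff.mp (Nat.sub_lt hc one_pos : c - 1 < c)
    simp only [addF, delta]
    omega
  · simp only [addF, delta]
    omega

theorem IsPartition.conj_addF_delta_succ_sub_conj (j' : ℕ) :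
    conj (addF f (delta (m + 1))) (m + j' - conj f j') =
      conj (addF f (delta m)) (m + j' - conj f j') := by
  have hcp : conj f j' ≤ conj f 0 := (isPartition_conj hf).1 (Nat.zero_le j')
  rw [hf.conj_addF_delta_eq_conj hpm (j' := j') (by omega) le_rfl]
  rcases Nat.eq_zero_or_pos (m + j' - conj f j') with h | h
  · rw [h, hf.conj_addF_delta_of_add_lt (by omega)]
    omega
  · obtain ⟨j, hj⟩ : ∃ j, m + j' - conj f j' = j + 1 :=
      ⟨_, (Nat.succ_pred_eq_of_pos h).symm⟩
    rw [hj, hf.conj_addF_delta_succ_succ hpm, hf.conj_addF_delta_eq_conj hpm] <;> omega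

theorem IsPartition.conj_addF_delta_of_ne_succ {j : ℕ}
    (hj : conj (addF f (delta (m + 1))) j ≠ conj (addF f (delta m)) j + 1) :
    m ≤ j + conj (addF f (delta m)) j ∧
      conj f (j + conj (addF f (delta m)) j - m) = conj (addF f (delta m)) j := by
  set c := conj (addF f (delta m)) j
  have hc : conj (addF f (delta (m + 1))) j = c := by
    have := hf.conj_addF_delta_le_succ (m := m) j
    have := hf.conj_addF_delta_succ_le hpm j
    omega
  have hzero : m ≤ c → f c = 0 := fun h => hf.eq_zero_of_conj_zero_le (hpm.trans h)
  have hcm : c ≤ m := hf.conj_addF_delta_le hpm j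
  have hend : (j = 0 ∧ c = m) ∨ addF f (delta m) c < j := by
    cases j with
    | zero =>
      rw [hf.conj_addF_delta_of_add_lt (by omega)] at hc
      omega
    | succ j =>
      rw [hf.conj_addF_delta_succ_succ hpm] at hc
      have := (hf.addF_delta m).lt_conj_iff (i := c) (j := j)
      rw [hc, lt_self_iff_false, false_iff, not_lt] at this
      omega
  simp only [addF, delta] at hend
  refine ⟨by omega, hf.conj_eq (fun hc0 => ?_) (by omega)⟩
  have := (hf.addF_delta m).lt_conj_iff.mp (Nat.sub_lt hc0 one_pos : c - 1 < c)
  simp only [addF, delta] at this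
  omega

theorem IsPartition.filter_conj_addF_delta_ne_succ_eq_image (i : ℕ) :
    (range (addF f (delta m) i)).filter
        (fun j => conj (addF f (delta (m + 1))) j ≠ conj (addF f (delta m)) j + 1) =
      (range (f i)).image fun j' => m + j' - conj f j' := by
  ext j
  simp only [mem_filter, mem_range, mem_image]
  constructor
  · rintro ⟨hj, hj'⟩
    obtain ⟨hmj, hconj⟩ := hf.conj_addF_delta_of_ne_succ hpm hj'
    set c := conj (addF f (delta m)) j
    have hic : i < c := (hf.addF_delta m).lt_conj_iff.mpr hj
    have hlast := (hf.addF_delta m).lt_conj_iff.mp (Nat.sub_lt (by omega) one_pos : c - 1 < c)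
    have hanti : f (c - 1) ≤ f i := hf.1 (by omega)
    have hcm := hf.conj_addF_delta_le hpm j
    simp only [addF, delta] at hlast
    exact ⟨j + c - m, by omega, by rw [hconj]; omega⟩
  · rintro ⟨j', hj', rfl⟩
    have hic : i < conj f j' := hf.lt_conj_iff.mpr hj'
    have hcp : conj f j' ≤ conj f 0 := (isPartition_conj hf).1 (Nat.zero_le j')
    refine ⟨by simp only [addF, delta]; omega, ?_⟩
    rw [hf.conj_addF_delta_succ_sub_conj hpm]
    omega

theorem IsPartition.injective_add_sub_conj : Function.Injective fun j' => m + j' - conj f j' := by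
  intro x y hxy
  have hx := hf.conj_addF_delta_eq_conj hpm (j := m + x - conj f x) (by omega) le_rfl
  have hy := hf.conj_addF_delta_eq_conj hpm (j := m + y - conj f y) (by omega) le_rfl
  have hxp : conj f x ≤ conj f 0 := (isPartition_conj hf).1 (Nat.zero_le x)
  have hyp : conj f y ≤ conj f 0 := (isPartition_conj hf).1 (Nat.zero_le y)
  simp only at hxy
  rw [hxy] at hx
  omega

end Staircase

section StaircaseUnion

variable {f g : ℕ → ℕ} {m : ℕ} (hf : IsPartition f) (hg : IsPartition g)

include hf hg

theorem unionF_addF_delta_le_succ (i : ℕ) :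
    unionF (addF f (delta m)) g i ≤ unionF (addF f (delta (m + 1))) g i :=
  le_of_forall_lt fun j hj => by
    rw [lt_unionF_iff (hf.addF_delta _) hg] at hj ⊢
    exact lt_of_lt_of_le hj (Nat.add_le_add_right (hf.conj_addF_delta_le_succ j) _)

theorem unionF_addF_delta_succ_le (hpm : conj f 0 ≤ m) (i : ℕ) :
    unionF (addF f (delta (m + 1))) g i ≤ unionF (addF f (delta m)) g i + 1 := by
  set v := unionF (addF f (delta m)) g i
  by_contra! h
  rw [lt_unionF_iff (hf.addF_delta _) hg, hf.conj_addF_delta_succ_succ hpm] at h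
  have : conj g (v + 1) ≤ conj g v := (isPartition_conj hg).1 (Nat.le_succ v)
  exact lt_irrefl v ((lt_unionF_iff (hf.addF_delta _) hg).mpr (by omega))

variable (hm : conj f 0 + g 0 ≤ m)
include hm

theorem unionF_addF_delta_apply_of_lt {i : ℕ} (hi : i < conj f 0) :
    unionF (addF f (delta m)) g i = addF f (delta m) i := by
  have := hf.lt_conj_iff.mp hi
  exact unionF_apply_of_le (hf.addF_delta m) hg (by simp only [addF, delta]; omega)

theorem unionF_addF_delta_apply_sub_add {k : ℕ} (hk : k < conj g 0) :
    unionF (addF f (delta m)) g (m - g k + k) = g k ∧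
      unionF (addF f (delta (m + 1))) g (m - g k + k) = g k := by
  have hgk : 0 < g k := hg.lt_conj_iff.mp hk
  have := hg.1 (Nat.zero_le k)
  have h₁ := hf.conj_addF_delta_of_add_lt (m := m) (j := g k - 1) (by omega)
  have h₂ := (isPartition_conj (hf.addF_delta m)).1 (Nat.sub_le (g k) 1)
  have h₃ := hf.conj_addF_delta_of_add_lt (m := m + 1) (j := g k - 1) (by omega)
  have h₄ := hf.conj_addF_delta_of_add_lt (m := m + 1) (j := g k) (by omega)
  exact ⟨unionF_apply_eq_of_le_of_le (hf.addF_delta _) hg (by omega) (by omega),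
    unionF_apply_eq_of_le_of_le (hf.addF_delta _) hg (by omega) (by omega)⟩

theorem unionF_addF_delta_apply_le {i : ℕ} (hi : conj f 0 ≤ i) :
    unionF (addF f (delta m)) g i ≤ m - conj f 0 := by
  refine not_lt.mp fun h => ?_
  rw [lt_unionF_iff (hf.addF_delta _) hg, hg.conj_eq_zero (by omega),
    hf.conj_addF_delta_eq_conj (by omega) (j' := 0) (by omega) (by omega)] at h
  omega

theorem exists_eq_sub_add_of_unionF_addF_delta_succ_eq {i : ℕ} (hi : conj f 0 ≤ i)
    (hpos : 0 < unionF (addF f (delta m)) g i)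
    (heq : unionF (addF f (delta (m + 1))) g i = unionF (addF f (delta m)) g i) :
    ∃ k < conj g 0, i = m - g k + k := by
  set v := unionF (addF f (delta m)) g i
  have hvm := unionF_addF_delta_apply_le hf hg hm hi
  have hlt := (lt_unionF_iff (hf.addF_delta _) hg).mp (Nat.sub_lt hpos one_pos : v - 1 < v)
  have hge : ¬ i < conj (addF f (delta (m + 1))) v + conj g v := fun h => by
    have := (lt_unionF_iff (hf.addF_delta (m + 1)) hg).mpr h
    rw [heq] at this
    exact lt_irrefl v this
  rw [hf.conj_addF_delta_of_add_lt (by omega)] at hlt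
  rw [hf.conj_addF_delta_of_add_lt (by omega)] at hge
  set k := i - (m - v)
  have hgk : g k = v := by
    have := hg.lt_conj_iff (i := k) (j := v - 1)
    have := hg.lt_conj_iff (i := k) (j := v)
    omega
  exact ⟨k, hg.lt_conj_iff.mpr (hgk ▸ hpos), by omega⟩

end StaircaseUnion

section HookRows

def hookRow (a b : K) (L Ls : ℕ → ℕ) (i : ℕ) : K :=
  ∏ j ∈ range (L i),
    if Bosonic L Ls i j then 1 - a ^ (Ls i - (j + 1)) * b ^ (conj L j - i) else 1

theorem hdownGen_eq_prod_hookRow (a b : K) {L : ℕ → ℕ} (Ls : ℕ → ℕ) (hL : IsPartition L)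
    {N : ℕ} (hN : conj L 0 ≤ N) : hdownGen a b L Ls = ∏ i ∈ range N, hookRow a b L Ls i :=
  prod_subset (range_subset_range.mpr hN) fun i _ hi => by
    simp only [hL.eq_zero_of_conj_zero_le (not_lt.mp (mem_range.not.mp hi)), range_zero,
      prod_empty]

variable {f g : ℕ → ℕ} {m : ℕ} (hf : IsPartition f) (hg : IsPartition g)
  (hm : conj f 0 + g 0 ≤ m) (u v : K)
include hf hg hm

theorem hookRow_of_lt {i : ℕ} (hi : i < conj f 0) :
    hookRow u v (unionF (addF f (delta m)) g) (unionF (addF f (delta (m + 1))) g) i =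
      ∏ j ∈ range (f i),
        (1 - u ^ (f i - (j + 1) + (conj f j - (i + 1)) + 1) * v ^ (conj f j - (i + 1) + 1)) := by
  have hpm : conj f 0 ≤ m := by omega
  have hL := unionF_addF_delta_apply_of_lt hf hg hm hi
  have hLs := unionF_addF_delta_apply_of_lt hf hg (m := m + 1) (by omega) hi
  have hbos : ∀ j,
      Bosonic (unionF (addF f (delta m)) g) (unionF (addF f (delta (m + 1))) g) i j ↔
        conj (addF f (delta (m + 1))) j ≠ conj (addF f (delta m)) j + 1 := fun j => by
    rw [Bosonic, conj_unionF (hf.addF_delta _) hg, conj_unionF (hf.addF_delta _) hg, hL, hLs]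
    simp only [addF, delta]
    omega
  rw [hookRow, hL, hLs, ← prod_congr rfl fun j _ => if_congr (hbos j).symm rfl rfl,
    ← prod_filter, hf.filter_conj_addF_delta_ne_succ_eq_image hpm,
    prod_image (hf.injective_add_sub_conj hpm).injOn]
  refine prod_congr rfl fun j hj => ?_
  have hj := mem_range.mp hj
  have hij : i < conj f j := hf.lt_conj_iff.mpr hj
  have hcp : conj f j ≤ conj f 0 := (isPartition_conj hf).1 (Nat.zero_le j)
  rw [conj_unionF (hf.addF_delta _) hg,
    hf.conj_addF_delta_eq_conj hpm (j' := j) (by omega) le_rfl, hg.conj_eq_zero (by omega)]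
  simp only [addF, delta]
  congr 3 <;> omega

theorem hookRow_sub_add {k : ℕ} (hk : k < conj g 0) :
    hookRow u v (unionF (addF f (delta m)) g) (unionF (addF f (delta (m + 1))) g) (m - g k + k) =
      ∏ j ∈ range (g k),
        (1 - u ^ (g k - (j + 1)) * v ^ (g k - (j + 1) + (conj g j - (k + 1)) + 1)) := by
  obtain ⟨hL, hLs⟩ := unionF_addF_delta_apply_sub_add hf hg hm hk
  have hgk := hg.1 (Nat.zero_le k)
  rw [hookRow, hL, hLs]
  refine prod_congr rfl fun j hj => ?_
  have hj := mem_range.mp hj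
  have hkj : k < conj g j := hg.lt_conj_iff.mpr hj
  rw [if_pos (by rw [Bosonic, hL, hLs]; omega), conj_unionF (hf.addF_delta _) hg,
    hf.conj_addF_delta_of_add_lt (by omega)]
  congr 3
  omega

theorem hookRow_eq_one {i : ℕ} (hi : conj f 0 ≤ i) (hiC : ∀ k < conj g 0, i ≠ m - g k + k) :
    hookRow u v (unionF (addF f (delta m)) g) (unionF (addF f (delta (m + 1))) g) i = 1 := by
  refine prod_eq_one fun j hj => if_neg ?_
  have hj := mem_range.mp hj
  have hrow := unionF_addF_delta_apply_le hf hg hm hi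
  have hle := unionF_addF_delta_le_succ hf hg (m := m) i
  have hsucc := unionF_addF_delta_succ_le hf hg (m := m) (by omega) i
  have hferm : unionF (addF f (delta (m + 1))) g i ≠ unionF (addF f (delta m)) g i := fun h => by
    obtain ⟨k, hk, rfl⟩ :=
      exists_eq_sub_add_of_unionF_addF_delta_succ_eq hf hg hm hi (by omega) h
    exact hiC k hk rfl
  rw [Bosonic, not_not, conj_unionF (hf.addF_delta _) hg, conj_unionF (hf.addF_delta _) hg,
    hf.conj_addF_delta_of_add_lt (by omega), hf.conj_addF_delta_of_add_lt (by omega)]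
  omega

theorem hdownGen_unionF_addF_delta :
    hdownGen u v (unionF (addF f (delta m)) g) (unionF (addF f (delta (m + 1))) g) =
      hookProd f (fun a l => 1 - u ^ (a + l + 1) * v ^ (l + 1)) *
        hookProd g (fun a l => 1 - u ^ a * v ^ (a + l + 1)) := by
  have hmono : StrictMono fun k => m - g k + k := fun k k' h => by
    have := hg.1 h.le
    have := hg.1 (Nat.zero_le k)
    dsimp only
    omega
  set C := (range (conj g 0)).image fun k => m - g k + k
  have hC : ∀ i ∈ C, conj f 0 ≤ i ∧ i < m + conj g 0 := by
    simp only [C, mem_image, mem_range]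
    rintro _ ⟨k, hk, rfl⟩
    have := hg.1 (Nat.zero_le k)
    omega
  have hN : conj (unionF (addF f (delta m)) g) 0 ≤ m + conj g 0 := by
    rw [conj_unionF (hf.addF_delta _) hg]
    exact Nat.add_le_add_right (hf.conj_addF_delta_le (by omega) 0) _
  have hsub : range (conj f 0) ∪ C ⊆ range (m + conj g 0) := fun i hi => by
    rcases mem_union.mp hi with hi | hi
    · exact mem_range.mpr (by have := mem_range.mp hi; omega)
    · exact mem_range.mpr (hC i hi).2
  have hdisj : Disjoint (range (conj f 0)) C :=
    disjoint_left.mpr fun i hi hiC => by have := (hC i hiC).1; have := mem_range.mp hi; omega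
  have hone : ∀ i ∈ range (m + conj g 0), i ∉ range (conj f 0) ∪ C →
      hookRow u v (unionF (addF f (delta m)) g) (unionF (addF f (delta (m + 1))) g) i = 1 := by
    intro i _ hi
    simp only [C, mem_union, mem_range, mem_image, not_or, not_exists, not_and, not_lt] at hi
    exact hookRow_eq_one hf hg hm u v hi.1 fun k hk h => hi.2 k hk h.symm
  rw [hdownGen_eq_prod_hookRow _ _ _ (isPartition_unionF (hf.addF_delta _) hg) hN,
    ← prod_subset hsub hone, prod_union hdisj, prod_image hmono.injective.injOn]
  exact congr_arg₂ (· * ·)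
    (prod_congr rfl fun i hi => hookRow_of_lt hf hg hm u v (mem_range.mp hi))
    (prod_congr rfl fun k hk => hookRow_sub_add hf hg hm u v (mem_range.mp hk))

end HookRows

/-- **Norm correspondence in the stable sector** (Lemma C.1).
Let `λ`, `μ` be partitions and `m ≥ |λ| + |μ|`.  With `Λ* = (λ + δ^m) ∪ μ`,
`Λ⊛ = (λ + δ^{m+1}) ∪ μ`, and the conjugate superpartition given by
`(Λ')* = (μ' + δ^m) ∪ λ'`, `(Λ')⊛ = (μ' + δ^{m+1}) ∪ λ'`, one has in `ℚ(q,t)`: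
`q^{|λ|} · h↑_Λ(q,t) / h↓_Λ(q,t) = q^{|λ|} · b_λ(q,qt)⁻¹ · b_μ(qt,t)⁻¹`. -/
theorem norm_correspondence (f g : ℕ → ℕ) (hf : IsPartition f) (hg : IsPartition g)
    (m : ℕ) (hm : psize f + psize g ≤ m) :
    q ^ psize f *
        hdownGen t q (unionF (addF (conj g) (delta m)) (conj f))
          (unionF (addF (conj g) (delta (m+1))) (conj f)) /
        hdownGen q t (unionF (addF f (delta m)) g) (unionF (addF f (delta (m+1))) g) =
      q ^ psize f * (bProd q (q * t) f)⁻¹ * (bProd (q * t) t g)⁻¹ := by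
  have hm' : conj f 0 + g 0 ≤ m :=
    (Nat.add_le_add hf.conj_zero_le_psize hg.apply_zero_le_psize).trans hm
  have hm'' : conj (conj g) 0 + conj f 0 ≤ m := by rw [hg.conj_conj]; omega
  have hbf : bProd q (q * t) f = hookProd f (fun a l => 1 - q ^ (a + l + 1) * t ^ (l + 1)) /
      hookProd f (fun a l => 1 - t ^ l * q ^ (l + a + 1)) := by
    rw [hf.bProd_eq_hookProd, ← hookProd_div]
    exact congr_arg (hookProd f) (funext₂ fun a l => by ring)
  have hbg : bProd (q * t) t g = hookProd g (fun a l => 1 - q ^ a * t ^ (a + l + 1)) /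
      hookProd g (fun a l => 1 - t ^ (l + a + 1) * q ^ (a + 1)) := by
    rw [hg.bProd_eq_hookProd, ← hookProd_div]
    exact congr_arg (hookProd g) (funext₂ fun a l => by ring)
  rw [hdownGen_unionF_addF_delta hf hg hm',
    hdownGen_unionF_addF_delta (isPartition_conj hg) (isPartition_conj hf) hm'',
    hg.hookProd_conj, hf.hookProd_conj, hbf, hbg, inv_div, inv_div]
  ring

end DoubleMacdonald
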